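/- Any complete length space satisfying the CAT(0) four-point comparison is geodesic: every pair of points is joined by a geodesic. (Key step: approximate midpoints form a Cauchy sequence, since the CAT(0) comparison for the quadruple x, y, zₙ, zₘ forces dist(zₙ,zₘ) → 0 when zₙ, zₘ are (1/n)- and (1/m)-midpoints.) -/
import Mathlib


open Set

/-- Distance in a Euclidean comparison triangle with side lengths `a`, `b`, `c`, from the
apex to the point of the side of length `c` at parameter `t ∈ [0,1]`. -/
noncomputable def catDist (a b c t : ℝ) : ℝ :=
  Real.sqrt ((1 - t) * a ^ 2 + t * b ^ 2 - t * (1 - t) * c ^ 2)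

/-- The CAT(0) four-point comparison for a metric space. -/
def Cat0Cmp (X : Type*) [MetricSpace X] : Prop :=
  ∀ p q x y : X, ∀ t ∈ Icc (0:ℝ) 1,
    dist p q ≤ catDist (dist p x) (dist p y) (dist x y) t
      + catDist (dist q x) (dist q y) (dist x y) t

open Filter Topology in
/-- Approximate `t`-points exist in a length space. -/
lemma approx_point_aux {X : Type*} [MetricSpace X]
    (hlen : ∀ x y : X, ∀ ε > (0:ℝ), ∃ α : ℝ → X,
      ContinuousOn α (Icc 0 1) ∧ α 0 = x ∧ α 1 = y ∧
      eVariationOn α (Icc 0 1) < ENNReal.ofReal (dist x y + ε))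
    (x y : X) {t ε : ℝ} (ht : t ∈ Icc (0:ℝ) 1) (hε : 0 < ε) :
    ∃ z : X, dist x z ≤ t * dist x y + ε ∧ dist z y ≤ (1 - t) * dist x y + ε := by
  obtain ⟨α, hαc, hα0, hα1, hαv⟩ := hlen x y ε hε
  set d := dist x y with hd
  set g : ℝ → ℝ := fun u => (1 - t) * dist x (α u) - t * dist (α u) y with hgdef
  have hg : ContinuousOn g (Icc 0 1) :=
    (continuousOn_const.mul ((continuous_const.dist continuous_id).comp_continuousOn hαc)).sub
      (continuousOn_const.mul ((continuous_id.dist continuous_const).comp_continuousOn hαc))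
  have hg0 : g 0 = -(t * d) := by simp [hgdef, hα0, ← hd]
  have hg1 : g 1 = (1 - t) * d := by simp [hgdef, hα1, ← hd, dist_comm]
  have hdnn : (0:ℝ) ≤ d := dist_nonneg
  have h0mem : (0:ℝ) ∈ Icc (g 0) (g 1) := by
    rw [hg0, hg1]
    constructor
    · nlinarith [mul_nonneg ht.1 hdnn]
    · nlinarith [ht.2]
  obtain ⟨u, hu, hgu⟩ := intermediate_value_Icc (by norm_num : (0:ℝ) ≤ 1) hg h0mem
  set a := dist x (α u) with ha
  set b := dist (α u) y with hb
  have hsplit := eVariationOn.Icc_add_Icc α hu.1 hu.2 hu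
  rw [inter_eq_right.2 (Icc_subset_Icc le_rfl hu.2),
      inter_eq_right.2 (Icc_subset_Icc hu.1 le_rfl), inter_self] at hsplit
  have e1 : edist (α 0) (α u) ≤ eVariationOn α (Icc 0 u) :=
    eVariationOn.edist_le α ⟨le_rfl, hu.1⟩ ⟨hu.1, le_rfl⟩
  have e2 : edist (α u) (α 1) ≤ eVariationOn α (Icc u 1) :=
    eVariationOn.edist_le α ⟨le_rfl, hu.2⟩ ⟨hu.2, le_rfl⟩
  have esum : ENNReal.ofReal (a + b) < ENNReal.ofReal (d + ε) := by
    rw [ENNReal.ofReal_add dist_nonneg dist_nonneg, ← hα0, ← hα1,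
        ← edist_dist, ← edist_dist]
    calc edist (α 0) (α u) + edist (α u) (α 1)
        ≤ eVariationOn α (Icc 0 u) + eVariationOn α (Icc u 1) := add_le_add e1 e2
      _ = eVariationOn α (Icc 0 1) := hsplit
      _ < ENNReal.ofReal (dist x y + ε) := hαv
  have hab : a + b < d + ε := by
    rwa [ENNReal.ofReal_lt_ofReal_iff (by positivity)] at esum
  have hgu' : (1 - t) * a - t * b = 0 := hgu
  have ha' : a = t * (a + b) := by linear_combination hgu'
  have hb' : b = (1 - t) * (a + b) := by linear_combination (-1 : ℝ) * hgu'
  refine ⟨α u, ?_, ?_⟩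
  · rw [← ha, ha']
    nlinarith [mul_le_mul_of_nonneg_left hab.le ht.1, ht.2, hε.le]
  · rw [← hb, hb']
    nlinarith [mul_le_mul_of_nonneg_left hab.le (by linarith [ht.2] : (0:ℝ) ≤ 1 - t), ht.1, hε.le]

lemma catDist_bound_aux {a b d t ε : ℝ} (ha0 : 0 ≤ a) (hb0 : 0 ≤ b) (hd : 0 ≤ d)
    (ht : t ∈ Icc (0:ℝ) 1) (hε : 0 < ε) (hε1 : ε ≤ 1)
    (ha : a ≤ t * d + ε) (hb : b ≤ (1 - t) * d + ε) :
    catDist a b d t ≤ Real.sqrt ((d + 1) * ε) := by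
  apply Real.sqrt_le_sqrt
  have h1 : a ^ 2 ≤ (t * d + ε) ^ 2 := by nlinarith
  have h2 : b ^ 2 ≤ ((1 - t) * d + ε) ^ 2 := by nlinarith
  have h3 : (1 - t) * a ^ 2 ≤ (1 - t) * (t * d + ε) ^ 2 :=
    mul_le_mul_of_nonneg_left h1 (by linarith [ht.2])
  have h4 : t * b ^ 2 ≤ t * ((1 - t) * d + ε) ^ 2 :=
    mul_le_mul_of_nonneg_left h2 ht.1
  nlinarith [mul_nonneg (mul_nonneg (sq_nonneg (2*t - 1)) hd) hε.le,
    mul_nonneg hε.le (by linarith : (0:ℝ) ≤ 1 - ε)]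

open Filter Topology in
/-- Exact `t`-points exist in a complete space with CAT(0) comparison and
approximate `t`-points. -/
lemma exact_point_aux {X : Type*} [MetricSpace X] [CompleteSpace X]
    (hcat : Cat0Cmp X)
    (hap : ∀ x y : X, ∀ t ∈ Icc (0:ℝ) 1, ∀ ε > (0:ℝ),
      ∃ z : X, dist x z ≤ t * dist x y + ε ∧ dist z y ≤ (1 - t) * dist x y + ε)
    (x y : X) {t : ℝ} (ht : t ∈ Icc (0:ℝ) 1) :
    ∃ z : X, dist x z = t * dist x y ∧ dist z y = (1 - t) * dist x y := by
  set d := dist x y with hd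
  have hdnn : (0:ℝ) ≤ d := dist_nonneg
  have hεpos : ∀ n : ℕ, (0:ℝ) < 1 / (n + 1) := fun n => by positivity
  choose z hz1 hz2 using fun n : ℕ => hap x y t ht (1 / (n + 1)) (hεpos n)
  have hε1 : ∀ n : ℕ, (1:ℝ) / (n + 1) ≤ 1 := fun n => by
    rw [div_le_one (by positivity)]; linarith [Nat.cast_nonneg (α := ℝ) n]
  have hterm : ∀ n : ℕ, catDist (dist (z n) x) (dist (z n) y) d t
      ≤ Real.sqrt ((d + 1) * (1 / (n + 1))) := fun n => by
    apply catDist_bound_aux dist_nonneg dist_nonneg hdnn ht (hεpos n) (hε1 n)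
    · rw [dist_comm]; exact hz1 n
    · exact hz2 n
  have hmono : ∀ {N n : ℕ}, N ≤ n →
      Real.sqrt ((d + 1) * (1 / (n + 1))) ≤ Real.sqrt ((d + 1) * (1 / (N + 1))) := by
    intro N n hNn
    apply Real.sqrt_le_sqrt
    apply mul_le_mul_of_nonneg_left _ (by linarith)
    apply one_div_le_one_div_of_le (by positivity)
    have : (N:ℝ) ≤ n := Nat.cast_le.mpr hNn
    linarith
  have hcauchy : CauchySeq z := by
    refine cauchySeq_of_le_tendsto_0
      (fun N : ℕ => 2 * Real.sqrt ((d + 1) * (1 / (N + 1)))) ?_ ?_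
    · intro n m N hn hm
      calc dist (z n) (z m)
          ≤ catDist (dist (z n) x) (dist (z n) y) (dist x y) t
            + catDist (dist (z m) x) (dist (z m) y) (dist x y) t := hcat (z n) (z m) x y t ht
        _ ≤ Real.sqrt ((d + 1) * (1 / (N + 1))) + Real.sqrt ((d + 1) * (1 / (N + 1))) := by
            rw [← hd]; exact add_le_add ((hterm n).trans (hmono hn)) ((hterm m).trans (hmono hm))
        _ = 2 * Real.sqrt ((d + 1) * (1 / (N + 1))) := by ring
    · have h1 : Tendsto (fun N : ℕ => (d + 1) * (1 / ((N:ℝ) + 1))) atTop (𝓝 0) := by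
        simpa using (tendsto_one_div_add_atTop_nhds_zero_nat).const_mul (d + 1)
      have h2 := (Real.continuous_sqrt.tendsto 0).comp h1
      simpa using h2.const_mul 2
  obtain ⟨w, hw⟩ := cauchySeq_tendsto_of_complete hcauchy
  have htd : Tendsto (fun n : ℕ => (1:ℝ) / (n + 1)) atTop (𝓝 0) :=
    tendsto_one_div_add_atTop_nhds_zero_nat
  have hwx : dist x w ≤ t * d := by
    have hf : Tendsto (fun n => dist x (z n)) atTop (𝓝 (dist x w)) :=
      tendsto_const_nhds.dist hw
    have hg : Tendsto (fun n : ℕ => t * d + 1 / (n + 1)) atTop (𝓝 (t * d)) := by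
      simpa using tendsto_const_nhds.add htd
    exact le_of_tendsto_of_tendsto' hf hg hz1
  have hwy : dist w y ≤ (1 - t) * d := by
    have hf : Tendsto (fun n => dist (z n) y) atTop (𝓝 (dist w y)) :=
      hw.dist tendsto_const_nhds
    have hg : Tendsto (fun n : ℕ => (1 - t) * d + 1 / (n + 1)) atTop (𝓝 ((1 - t) * d)) := by
      simpa using tendsto_const_nhds.add htd
    exact le_of_tendsto_of_tendsto' hf hg hz2
  have htri : d ≤ dist x w + dist w y := dist_triangle x w y
  have hsum : t * d + (1 - t) * d = d := by ring
  exact ⟨w, by linarith, by linarith⟩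

lemma catDist_eq_abs_aux {d s t : ℝ} (hd : d ≠ 0) :
    catDist s (d - s) d (t / d) = |s - t| := by
  unfold catDist
  have : (1 - t / d) * s ^ 2 + t / d * (d - s) ^ 2 - t / d * (1 - t / d) * d ^ 2
      = (s - t) ^ 2 := by
    field_simp
    ring
  rw [this, Real.sqrt_sq_eq_abs]

/-- Any complete length space satisfying the CAT(0) four-point comparison is geodesic. -/
theorem stmt_12 {X : Type*} [MetricSpace X] [CompleteSpace X]
    (hlen : ∀ x y : X, ∀ ε > (0:ℝ), ∃ α : ℝ → X,
      ContinuousOn α (Icc 0 1) ∧ α 0 = x ∧ α 1 = y ∧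
      eVariationOn α (Icc 0 1) < ENNReal.ofReal (dist x y + ε))
    (hcat : Cat0Cmp X) :
    ∀ x y : X, ∃ γ : ℝ → X, γ 0 = x ∧ γ (dist x y) = y ∧
      ∀ s ∈ Icc (0:ℝ) (dist x y), ∀ t ∈ Icc (0:ℝ) (dist x y),
        dist (γ s) (γ t) = |s - t| := by
  intro x y
  have hap : ∀ x y : X, ∀ t ∈ Icc (0:ℝ) 1, ∀ ε > (0:ℝ),
      ∃ z : X, dist x z ≤ t * dist x y + ε ∧ dist z y ≤ (1 - t) * dist x y + ε :=
    fun x y t ht ε hε => approx_point_aux hlen x y ht hε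
  set d := dist x y with hd
  rcases eq_or_lt_of_le (dist_nonneg : (0:ℝ) ≤ d) with hd0 | hd0
  · -- degenerate case d = 0
    have hd0' : d = 0 := hd0.symm
    have hxy : x = y := by rw [← dist_eq_zero, ← hd, hd0']
    refine ⟨fun _ => x, rfl, hxy, ?_⟩
    intro s hs t ht
    have hs0 : s = 0 := le_antisymm (hs.2.trans_eq hd0') hs.1
    have ht0 : t = 0 := le_antisymm (ht.2.trans_eq hd0') ht.1
    simp [hs0, ht0]
  · -- main case 0 < d
    have hdne : d ≠ 0 := ne_of_gt hd0
    have H : ∀ t : ℝ, ∃ z : X, t ∈ Icc 0 d → dist x z = t ∧ dist z y = d - t := by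
      intro t
      by_cases htm : t ∈ Icc (0:ℝ) d
      · have htd : t / d ∈ Icc (0:ℝ) 1 :=
          ⟨div_nonneg htm.1 hd0.le, (div_le_one hd0).2 htm.2⟩
        obtain ⟨z, hz1, hz2⟩ := exact_point_aux hcat hap x y htd
        refine ⟨z, fun _ => ⟨?_, ?_⟩⟩
        · rw [hz1, ← hd]; field_simp
        · rw [hz2, ← hd]; field_simp
      · exact ⟨x, fun h => absurd h htm⟩
    choose γ hγ using H
    have key : ∀ s ∈ Icc (0:ℝ) d, ∀ t ∈ Icc (0:ℝ) d, dist (γ s) (γ t) = |s - t| := by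
      intro s hs t ht
      obtain ⟨hs1, hs2⟩ := hγ s hs
      obtain ⟨ht1, ht2⟩ := hγ t ht
      have hup : dist (γ s) (γ t) ≤ |s - t| := by
        have h := hcat (γ s) (γ t) x y (t / d)
          ⟨div_nonneg ht.1 hd0.le, (div_le_one hd0).2 ht.2⟩
        rw [dist_comm (γ s) x, dist_comm (γ t) x, hs1, hs2, ht1, ht2, ← hd] at h
        rw [catDist_eq_abs_aux hdne, catDist_eq_abs_aux hdne] at h
        simpa using h
      have hlow1 : d ≤ s + dist (γ s) (γ t) + (d - t) := by
        have := dist_triangle4 x (γ s) (γ t) y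
        rw [hs1, ht2, ← hd] at this
        linarith
      have hlow2 : d ≤ t + dist (γ t) (γ s) + (d - s) := by
        have := dist_triangle4 x (γ t) (γ s) y
        rw [ht1, hs2, ← hd] at this
        linarith
      have hlow : |s - t| ≤ dist (γ s) (γ t) := by
        rw [abs_sub_le_iff]
        constructor
        · rw [dist_comm] at hlow2; linarith
        · linarith
      exact le_antisymm hup hlow
    have h0 : γ 0 = x := by
      have := (hγ 0 ⟨le_rfl, hd0.le⟩).1
      rw [dist_eq_zero] at this
      exact this.symm
    have h1 : γ d = y := by
      have := (hγ d ⟨hd0.le, le_rfl⟩).2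
      rw [sub_self, dist_eq_zero] at this
      exact this
    exact ⟨γ, h0, h1, key⟩
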